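/- arXiv:1806.10284 — 3 statements merged into one kernel-verified Lean document; each statement's English description precedes it below -/
import Mathlib

section
/- Assume the diagonal matrices Λq and 3Λq − Λp are invertible. Define Q₀, Q₁, Q₂ and Q = [Q₁, Q₂, Q₀] as in the eigen-decomposition of C*C, and define P₂ := (I₃⊗T)[Λ₂−Λ₃; Λ₃−Λ₁; Λ₁−Λ₂]·(3Λq−Λp)^{−1/2}, P₁ := (I₃⊗T)[Λq−Λ₁*Λs; Λq−Λ₂*Λs; Λq−Λ₃*Λs]·((3Λq−Λp)Λq)^{−1/2}, P₀ := (I₃⊗T)[Λ₁*; Λ₂*; Λ₃*]·Λq^{−1/2}, and P := [P₂, P₁, P₀] ∈ ℂ^{3n×3n}. Then P is unitary and C = P · blockdiag(Λq^{1/2}, Λq^{1/2}, 0) · Q*; equivalently, C = P_r Σ_r Q_r* with P_r = [P₂, P₁], Q_r = [Q₁, Q₂] and Σ_r = blockdiag(Λq^{1/2}, Λq^{1/2}). (Section 5.1, the singular value decomposition of the discrete single-curl operator C.) -/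
open Matrix Kronecker

/-- Vertically stacked `3n × n` matrix `[A; B; C]`. -/
def stack3 {n : ℕ} (A B C : Matrix (Fin n) (Fin n) ℂ) :
    Matrix (Fin 3 × Fin n) (Fin n) ℂ :=
  Matrix.of fun p t => if p.1 = 0 then A p.2 t else if p.1 = 1 then B p.2 t else C p.2 t

/-- Horizontally concatenated `3n × 3n` matrix `[A, B, C]` from three `3n × n` blocks. -/
def hstack3 {n : ℕ} (A B C : Matrix (Fin 3 × Fin n) (Fin n) ℂ) :
    Matrix (Fin 3 × Fin n) (Fin 3 × Fin n) ℂ :=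
  Matrix.of fun p q => if q.1 = 0 then A p q.2 else if q.1 = 1 then B p q.2 else C p q.2

/-- Horizontally concatenated `3n × 2n` matrix `[A, B]` from two `3n × n` blocks. -/
def hstack2 {n : ℕ} (A B : Matrix (Fin 3 × Fin n) (Fin n) ℂ) :
    Matrix (Fin 3 × Fin n) (Fin 2 × Fin n) ℂ :=
  Matrix.of fun p q => if q.1 = 0 then A p q.2 else B p q.2

/-- The `3n × 3n` block diagonal matrix `blockdiag(A, B, 0)`. -/
def blockdiag3 {n : ℕ} (A B : Matrix (Fin n) (Fin n) ℂ) :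
    Matrix (Fin 3 × Fin n) (Fin 3 × Fin n) ℂ :=
  Matrix.of fun p q =>
    if p.1 = q.1 then
      (if p.1 = 0 then A p.2 q.2 else if p.1 = 1 then B p.2 q.2 else 0)
    else 0

/-- The `2n × 2n` block diagonal matrix `blockdiag(A, A)`. -/
def blockdiag2 {n : ℕ} (A : Matrix (Fin n) (Fin n) ℂ) :
    Matrix (Fin 2 × Fin n) (Fin 2 × Fin n) ℂ :=
  Matrix.of fun p q => if p.1 = q.1 then A p.2 q.2 else 0

/-- The discrete curl operator `C = [[0, −C₃, C₂], [C₃, 0, −C₁], [−C₂, C₁, 0]]`. -/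
def curlMat {n : ℕ} (C₁ C₂ C₃ : Matrix (Fin n) (Fin n) ℂ) :
    Matrix (Fin 3 × Fin n) (Fin 3 × Fin n) ℂ :=
  Matrix.of fun p q =>
    if p.1 = 0 ∧ q.1 = 1 then -C₃ p.2 q.2
    else if p.1 = 0 ∧ q.1 = 2 then C₂ p.2 q.2
    else if p.1 = 1 ∧ q.1 = 0 then C₃ p.2 q.2
    else if p.1 = 1 ∧ q.1 = 2 then -C₁ p.2 q.2
    else if p.1 = 2 ∧ q.1 = 0 then -C₂ p.2 q.2
    else if p.1 = 2 ∧ q.1 = 1 then C₁ p.2 q.2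
    else 0

/-- For a diagonal matrix `D` with positive real diagonal entries, the diagonal
matrix `D^{−1/2}` of reciprocal square roots of its entries. -/
noncomputable def invSqrtDiag {n : ℕ} (D : Matrix (Fin n) (Fin n) ℂ) :
    Matrix (Fin n) (Fin n) ℂ :=
  Matrix.diagonal fun s => (((Real.sqrt ((D s s).re))⁻¹ : ℝ) : ℂ)

/-- For a diagonal matrix `D` with nonnegative real diagonal entries, the diagonal
matrix `D^{1/2}` of square roots of its entries. -/
noncomputable def sqrtDiag {n : ℕ} (D : Matrix (Fin n) (Fin n) ℂ) :
    Matrix (Fin n) (Fin n) ℂ :=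
  Matrix.diagonal fun s => ((Real.sqrt ((D s s).re) : ℝ) : ℂ)


/-! In the eigenbasis `T` every `n × n` block of the statement is diagonal, so after factoring
out `I₃ ⊗ T` all the `3n × 3n` matrices become block diagonal, with one `3 × 3` block per
frequency, i.e. per eigenvalue triple `v = (a, b, c)` of `(Λ₁, Λ₂, Λ₃)`. There the curl is the
cross-product matrix of `v`, and the claim is a `3 × 3` singular value decomposition: with
`x² = ‖v‖²` and `y² = 3‖v‖² - |a + b + c|²`, the columns `(b - c, c - a, a - b) / y`,
`(x² - conj vᵢ (a + b + c))ᵢ / (x y)` and `conj v / x` are orthonormal, and together with their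
counterparts for `Q` they factor the cross-product matrix with singular values `x, x, 0`.
Dropping the zero singular value gives the reduced form. -/

lemma Matrix.one_kronecker_conjTranspose_mul_self {m k R : Type*} [Fintype m] [DecidableEq m]
    [Fintype k] [DecidableEq k] [CommSemiring R] [StarRing R] {T : Matrix k k R}
    (hT : Tᴴ * T = 1) : ((1 : Matrix m m R) ⊗ₖ T)ᴴ * ((1 : Matrix m m R) ⊗ₖ T) = 1 := by
  rw [conjTranspose_kronecker, ← mul_kronecker_mul, hT, conjTranspose_one, one_mul,
    one_kronecker_one]

lemma Matrix.eq_mul_mul_conjTranspose_of_mul_eq {k R : Type*} [Fintype k] [DecidableEq k]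
    [Semiring R] [Star R] {T C Λ : Matrix k k R} (hT : T * Tᴴ = 1) (h : C * T = T * Λ) :
    C = T * Λ * Tᴴ := by
  rw [← h, Matrix.mul_assoc, hT, Matrix.mul_one]

lemma Matrix.conjTranspose_mul_self_mul_blockDiagonal {m o R : Type*} [Fintype m]
    [DecidableEq m] [Fintype o] [DecidableEq o] [CommSemiring R] [StarRing R]
    {M : Matrix (m × o) (m × o) R} (hM : Mᴴ * M = 1) {U : o → Matrix m m R}
    (hU : ∀ s, (U s)ᴴ * U s = 1) : (M * blockDiagonal U)ᴴ * (M * blockDiagonal U) = 1 := by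
  rw [conjTranspose_mul, Matrix.mul_assoc, ← Matrix.mul_assoc Mᴴ, hM, Matrix.one_mul,
    blockDiagonal_conjTranspose, ← blockDiagonal_mul]
  simp only [hU]
  exact blockDiagonal_one

lemma Matrix.mul_blockDiagonal_mul_blockDiagonal_mul_conjTranspose {m o R : Type*} [Fintype m]
    [Fintype o] [DecidableEq o] [CommSemiring R] [StarRing R] (M : Matrix (m × o) (m × o) R)
    (U S V : o → Matrix m m R) :
    M * blockDiagonal U * blockDiagonal S * (M * blockDiagonal V)ᴴ
      = M * blockDiagonal (fun s => U s * S s * (V s)ᴴ) * Mᴴ := by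
  rw [conjTranspose_mul, blockDiagonal_conjTranspose, blockDiagonal_mul, blockDiagonal_mul]
  simp only [Matrix.mul_assoc]

lemma Matrix.one_kronecker_mul_mul_conjTranspose_apply {m k : Type*} [Fintype m] [DecidableEq m]
    [Fintype k] (T : Matrix k k ℂ) (M : Matrix (m × k) (m × k) ℂ) (i j : m) (s t : k) :
    (((1 : Matrix m m ℂ) ⊗ₖ T) * M * ((1 : Matrix m m ℂ) ⊗ₖ T)ᴴ) (i, s) (j, t)
      = (T * Matrix.of (fun u v => M (i, u) (j, v)) * Tᴴ) s t := by
  simp [Matrix.mul_apply, Fintype.sum_prod_type, one_apply, apply_ite (starRingEnd ℂ), mul_ite]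

open ComplexConjugate

section Symbol

variable (a b c : ℂ)

/-- The entry of `Λq` at a frequency with eigenvalues `a, b, c`. -/
noncomputable def eigNormSq : ℝ := Complex.normSq a + Complex.normSq b + Complex.normSq c

/-- The entry of `3Λq - Λp` at a frequency with eigenvalues `a, b, c`. -/
noncomputable def eigGap : ℝ := 3 * eigNormSq a b c - Complex.normSq (a + b + c)

def curlSymbol : Matrix (Fin 3) (Fin 3) ℂ := !![0, -c, b; c, 0, -a; -b, a, 0]

/-- The columns are the restrictions of `P₂, P₁, P₀` to one frequency. -/
noncomputable def curlSvdLeft : Matrix (Fin 3) (Fin 3) ℂ :=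
  let x : ℂ := √(eigNormSq a b c)
  let y : ℂ := √(eigGap a b c)
  let q : ℂ := eigNormSq a b c
  let s := a + b + c
  !![(b - c) / y, (q - conj a * s) / (y * x), conj a / x;
     (c - a) / y, (q - conj b * s) / (y * x), conj b / x;
     (a - b) / y, (q - conj c * s) / (y * x), conj c / x]

/-- The columns are the restrictions of `Q₁, Q₂, Q₀` to one frequency. -/
noncomputable def curlSvdRight : Matrix (Fin 3) (Fin 3) ℂ :=
  let x : ℂ := √(eigNormSq a b c)
  let y : ℂ := √(eigGap a b c)
  let q : ℂ := eigNormSq a b c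
  let s := a + b + c
  !![(q - a * conj s) / (y * x), (conj c - conj b) / y, a / x;
     (q - b * conj s) / (y * x), (conj a - conj c) / y, b / x;
     (q - c * conj s) / (y * x), (conj b - conj a) / y, c / x]

noncomputable def curlSvdSigma : Matrix (Fin 3) (Fin 3) ℂ :=
  diagonal ![(√(eigNormSq a b c) : ℂ), (√(eigNormSq a b c) : ℂ), 0]

lemma eigNormSq_pos_of_eigGap_pos (h : 0 < eigGap a b c) : 0 < eigNormSq a b c := by
  unfold eigGap at h
  nlinarith [Complex.normSq_nonneg (a + b + c)]

lemma ofReal_eigNormSq : (eigNormSq a b c : ℂ) = conj a * a + conj b * b + conj c * c := by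
  simp [eigNormSq, Complex.normSq_eq_conj_mul_self]

lemma ofReal_eigGap : (eigGap a b c : ℂ)
    = 3 * (conj a * a + conj b * b + conj c * c) - (a + b + c) * (conj a + conj b + conj c) := by
  rw [eigGap]
  push_cast
  rw [ofReal_eigNormSq, ← Complex.mul_conj, map_add, map_add]

lemma ofReal_sqrt_eigNormSq_sq :
    ((√(eigNormSq a b c) : ℝ) : ℂ) ^ 2 = conj a * a + conj b * b + conj c * c := by
  have h : 0 ≤ eigNormSq a b c := by
    unfold eigNormSq
    simp only [Complex.normSq_nonneg, add_nonneg]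
  rw [← Complex.ofReal_pow, Real.sq_sqrt h, ofReal_eigNormSq]

variable {a b c}

lemma ofReal_sqrt_eigGap_sq (h : 0 ≤ eigGap a b c) : ((√(eigGap a b c) : ℝ) : ℂ) ^ 2
    = 3 * (conj a * a + conj b * b + conj c * c) - (a + b + c) * (conj a + conj b + conj c) := by
  rw [← Complex.ofReal_pow, Real.sq_sqrt h, ofReal_eigGap]

lemma curlSvdLeft_conjTranspose_mul_self (h : 0 < eigGap a b c) :
    (curlSvdLeft a b c)ᴴ * curlSvdLeft a b c = 1 := by
  have hx0 : ((√(eigNormSq a b c) : ℝ) : ℂ) ≠ 0 := by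
    exact_mod_cast (Real.sqrt_pos.2 (eigNormSq_pos_of_eigGap_pos a b c h)).ne'
  have hy0 : ((√(eigGap a b c) : ℝ) : ℂ) ≠ 0 := by exact_mod_cast (Real.sqrt_pos.2 h).ne'
  have hx := ofReal_sqrt_eigNormSq_sq a b c
  have hy := ofReal_sqrt_eigGap_sq h.le
  ext i j
  -- after clearing denominators, `x` and `y` occur only through `x²` and `y²`
  fin_cases i <;> fin_cases j <;>
    simp [curlSvdLeft, Matrix.mul_apply, Fin.sum_univ_three, ofReal_eigNormSq] <;>
    generalize ((√(eigNormSq a b c) : ℝ) : ℂ) = x at * <;>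
    generalize ((√(eigGap a b c) : ℝ) : ℂ) = y at * <;>
    field_simp <;> (try simp only [hx, hy]) <;> ring

lemma curlSvdLeft_mul_sigma_mul_right (h : 0 < eigGap a b c) :
    curlSvdLeft a b c * curlSvdSigma a b c * (curlSvdRight a b c)ᴴ = curlSymbol a b c := by
  have hx0 : ((√(eigNormSq a b c) : ℝ) : ℂ) ≠ 0 := by
    exact_mod_cast (Real.sqrt_pos.2 (eigNormSq_pos_of_eigGap_pos a b c h)).ne'
  have hy0 : ((√(eigGap a b c) : ℝ) : ℂ) ≠ 0 := by exact_mod_cast (Real.sqrt_pos.2 h).ne'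
  have hy := ofReal_sqrt_eigGap_sq h.le
  ext i j
  simp only [Matrix.mul_apply, curlSvdSigma, Fin.sum_univ_three]
  fin_cases i <;> fin_cases j <;>
    simp [curlSvdLeft, curlSvdRight, curlSymbol, ofReal_eigNormSq] <;>
    generalize ((√(eigNormSq a b c) : ℝ) : ℂ) = x at * <;>
    generalize ((√(eigGap a b c) : ℝ) : ℂ) = y at * <;>
    field_simp <;> simp only [hy] <;> ring

end Symbol

section Blocks

variable {n : ℕ}

lemma mul_hstack3 (M : Matrix (Fin 3 × Fin n) (Fin 3 × Fin n) ℂ)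
    (X Y Z : Matrix (Fin 3 × Fin n) (Fin n) ℂ) :
    M * hstack3 X Y Z = hstack3 (M * X) (M * Y) (M * Z) := by
  ext p ⟨j, t⟩
  fin_cases j <;> simp [hstack3, Matrix.mul_apply]

lemma stack3_mul (A B C D : Matrix (Fin n) (Fin n) ℂ) :
    stack3 A B C * D = stack3 (A * D) (B * D) (C * D) := by
  ext ⟨i, s⟩ t
  fin_cases i <;> simp [stack3, Matrix.mul_apply]

lemma blockDiagonal_eq_hstack3 (U : Fin n → Matrix (Fin 3) (Fin 3) ℂ) :
    blockDiagonal U = hstack3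
      (stack3 (diagonal (U · 0 0)) (diagonal (U · 1 0)) (diagonal (U · 2 0)))
      (stack3 (diagonal (U · 0 1)) (diagonal (U · 1 1)) (diagonal (U · 2 1)))
      (stack3 (diagonal (U · 0 2)) (diagonal (U · 1 2)) (diagonal (U · 2 2))) := by
  ext ⟨i, s⟩ ⟨j, t⟩
  fin_cases i <;> fin_cases j <;>
    simp [hstack3, stack3, blockDiagonal_apply, diagonal_apply, eq_comm]

lemma blockdiag3_diagonal (f g : Fin n → ℂ) :
    blockdiag3 (diagonal f) (diagonal g) = blockDiagonal fun s => diagonal ![f s, g s, 0] := by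
  ext ⟨i, s⟩ ⟨j, t⟩
  fin_cases i <;> fin_cases j <;> simp [blockdiag3, blockDiagonal_apply, diagonal_apply]

lemma hstack3_mul_blockdiag3_mul_conjTranspose (A B C D E F : Matrix (Fin 3 × Fin n) (Fin n) ℂ)
    (S S' : Matrix (Fin n) (Fin n) ℂ) :
    hstack3 A B C * blockdiag3 S S' * (hstack3 D E F)ᴴ = A * S * Dᴴ + B * S' * Eᴴ := by
  ext p q
  simp [hstack3, blockdiag3, Matrix.mul_apply, Fintype.sum_prod_type, Fin.sum_univ_three]

lemma hstack2_mul_blockdiag2_mul_conjTranspose (A B D E : Matrix (Fin 3 × Fin n) (Fin n) ℂ)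
    (S : Matrix (Fin n) (Fin n) ℂ) :
    hstack2 A B * blockdiag2 S * (hstack2 D E)ᴴ = A * S * Dᴴ + B * S * Eᴴ := by
  ext p q
  simp [hstack2, blockdiag2, Matrix.mul_apply, Fintype.sum_prod_type, Fin.sum_univ_two]

lemma curlMat_diagonal (a b c : Fin n → ℂ) :
    curlMat (diagonal a) (diagonal b) (diagonal c)
      = blockDiagonal fun s => curlSymbol (a s) (b s) (c s) := by
  ext ⟨i, s⟩ ⟨j, t⟩
  fin_cases i <;> fin_cases j <;>
    simp [curlMat, curlSymbol, blockDiagonal_apply, diagonal_apply, apply_ite (fun z : ℂ => -z)]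

lemma curlMat_conj (T A B C : Matrix (Fin n) (Fin n) ℂ) :
    curlMat (T * A * Tᴴ) (T * B * Tᴴ) (T * C * Tᴴ)
      = ((1 : Matrix (Fin 3) (Fin 3) ℂ) ⊗ₖ T) * curlMat A B C
        * ((1 : Matrix (Fin 3) (Fin 3) ℂ) ⊗ₖ T)ᴴ := by
  ext ⟨i, s⟩ ⟨j, t⟩
  rw [one_kronecker_mul_mul_conjTranspose_apply]
  fin_cases i <;> fin_cases j <;> simp [curlMat, Matrix.mul_apply]

lemma curlMat_eq_of_mul_eq_mul_diagonal {T C₁ C₂ C₃ : Matrix (Fin n) (Fin n) ℂ}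
    {a b c : Fin n → ℂ} (hT : T * Tᴴ = 1) (h₁ : C₁ * T = T * diagonal a)
    (h₂ : C₂ * T = T * diagonal b) (h₃ : C₃ * T = T * diagonal c) :
    curlMat C₁ C₂ C₃
      = ((1 : Matrix (Fin 3) (Fin 3) ℂ) ⊗ₖ T)
        * (blockDiagonal fun s => curlSymbol (a s) (b s) (c s))
        * ((1 : Matrix (Fin 3) (Fin 3) ℂ) ⊗ₖ T)ᴴ := by
  rw [eq_mul_mul_conjTranspose_of_mul_eq hT h₁, eq_mul_mul_conjTranspose_of_mul_eq hT h₂,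
    eq_mul_mul_conjTranspose_of_mul_eq hT h₃, curlMat_conj, curlMat_diagonal]

lemma invSqrtDiag_diagonal_ofReal (r : Fin n → ℝ) :
    invSqrtDiag (diagonal fun s => (r s : ℂ))
      = diagonal fun s => ((√(r s) : ℝ) : ℂ)⁻¹ := by
  simp [invSqrtDiag]

lemma invSqrtDiag_diagonal_mul_ofReal {r r' : Fin n → ℝ} (hr : ∀ s, 0 ≤ r s) :
    invSqrtDiag ((diagonal fun s => (r s : ℂ)) * diagonal fun s => (r' s : ℂ))
      = diagonal fun s => (((√(r s) : ℝ) : ℂ) * (√(r' s) : ℝ))⁻¹ := by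
  simp only [invSqrtDiag, diagonal_mul_diagonal, diagonal_apply_eq, ← Complex.ofReal_mul,
    Complex.ofReal_re, Real.sqrt_mul (hr _), Complex.ofReal_inv]

lemma sqrtDiag_diagonal_ofReal (r : Fin n → ℝ) :
    sqrtDiag (diagonal fun s => (r s : ℂ)) = diagonal fun s => ((√(r s) : ℝ) : ℂ) := by
  simp [sqrtDiag]

lemma conjTranspose_mul_diagonal_sum_eq_diagonal_eigNormSq (a b c : Fin n → ℂ) :
    (diagonal a)ᴴ * diagonal a + (diagonal b)ᴴ * diagonal b + (diagonal c)ᴴ * diagonal c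
      = diagonal fun s => (eigNormSq (a s) (b s) (c s) : ℂ) := by
  simp [diagonal_conjTranspose, diagonal_mul_diagonal, ofReal_eigNormSq]

lemma three_smul_sub_eq_diagonal_eigGap (a b c : Fin n → ℂ) :
    (3 : ℂ) • (diagonal fun s => (eigNormSq (a s) (b s) (c s) : ℂ))
      - (diagonal a + diagonal b + diagonal c) * (diagonal a + diagonal b + diagonal c)ᴴ
      = diagonal fun s => (eigGap (a s) (b s) (c s) : ℂ) := by
  simp [diagonal_conjTranspose, diagonal_mul_diagonal, ofReal_eigGap, ofReal_eigNormSq,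
    ← diagonal_smul]

lemma hstack3_eq_one_kronecker_mul_blockDiagonal_curlSvdLeft (T : Matrix (Fin n) (Fin n) ℂ)
    {a b c : Fin n → ℂ} {Λq Λs G : Matrix (Fin n) (Fin n) ℂ}
    (hq : Λq = diagonal fun s => (eigNormSq (a s) (b s) (c s) : ℂ))
    (hs : Λs = diagonal a + diagonal b + diagonal c)
    (hG : G = diagonal fun s => (eigGap (a s) (b s) (c s) : ℂ))
    (hpos : ∀ s, 0 < eigGap (a s) (b s) (c s)) :
    hstack3
      (((1 : Matrix (Fin 3) (Fin 3) ℂ) ⊗ₖ T)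
        * stack3 (diagonal b - diagonal c) (diagonal c - diagonal a) (diagonal a - diagonal b)
        * invSqrtDiag G)
      (((1 : Matrix (Fin 3) (Fin 3) ℂ) ⊗ₖ T)
        * stack3 (Λq - (diagonal a)ᴴ * Λs) (Λq - (diagonal b)ᴴ * Λs)
            (Λq - (diagonal c)ᴴ * Λs)
        * invSqrtDiag (G * Λq))
      (((1 : Matrix (Fin 3) (Fin 3) ℂ) ⊗ₖ T)
        * stack3 (diagonal a)ᴴ (diagonal b)ᴴ (diagonal c)ᴴ * invSqrtDiag Λq)
      = ((1 : Matrix (Fin 3) (Fin 3) ℂ) ⊗ₖ T)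
        * blockDiagonal fun s => curlSvdLeft (a s) (b s) (c s) := by
  rw [hG, hs, hq, invSqrtDiag_diagonal_mul_ofReal (fun s => (hpos s).le),
    blockDiagonal_eq_hstack3, mul_hstack3]
  simp only [invSqrtDiag_diagonal_ofReal, Matrix.mul_assoc, stack3_mul]
  congr 3 <;> simp [curlSvdLeft, diagonal_conjTranspose, diagonal_mul_diagonal, div_eq_mul_inv]

lemma hstack3_eq_one_kronecker_mul_blockDiagonal_curlSvdRight (T : Matrix (Fin n) (Fin n) ℂ)
    {a b c : Fin n → ℂ} {Λq Λs G : Matrix (Fin n) (Fin n) ℂ}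
    (hq : Λq = diagonal fun s => (eigNormSq (a s) (b s) (c s) : ℂ))
    (hs : Λs = diagonal a + diagonal b + diagonal c)
    (hG : G = diagonal fun s => (eigGap (a s) (b s) (c s) : ℂ))
    (hpos : ∀ s, 0 < eigGap (a s) (b s) (c s)) :
    hstack3
      (((1 : Matrix (Fin 3) (Fin 3) ℂ) ⊗ₖ T)
        * stack3 (Λq - diagonal a * Λsᴴ) (Λq - diagonal b * Λsᴴ) (Λq - diagonal c * Λsᴴ)
        * invSqrtDiag (G * Λq))
      (((1 : Matrix (Fin 3) (Fin 3) ℂ) ⊗ₖ T)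
        * stack3 ((diagonal c)ᴴ - (diagonal b)ᴴ) ((diagonal a)ᴴ - (diagonal c)ᴴ)
            ((diagonal b)ᴴ - (diagonal a)ᴴ)
        * invSqrtDiag G)
      (((1 : Matrix (Fin 3) (Fin 3) ℂ) ⊗ₖ T)
        * stack3 (diagonal a) (diagonal b) (diagonal c) * invSqrtDiag Λq)
      = ((1 : Matrix (Fin 3) (Fin 3) ℂ) ⊗ₖ T)
        * blockDiagonal fun s => curlSvdRight (a s) (b s) (c s) := by
  rw [hG, hs, hq, invSqrtDiag_diagonal_mul_ofReal (fun s => (hpos s).le),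
    blockDiagonal_eq_hstack3, mul_hstack3]
  simp only [invSqrtDiag_diagonal_ofReal, Matrix.mul_assoc, stack3_mul]
  congr 3 <;> simp [curlSvdRight, diagonal_conjTranspose, diagonal_mul_diagonal, div_eq_mul_inv]

end Blocks

theorem stmt_16_general (n : ℕ)
    (T Λ₁ Λ₂ Λ₃ C₁ C₂ C₃ : Matrix (Fin n) (Fin n) ℂ)
    (hT : Tᴴ * T = 1)
    (hΛ₁ : Λ₁.IsDiag) (hΛ₂ : Λ₂.IsDiag) (hΛ₃ : Λ₃.IsDiag)
    (h₁ : C₁ * T = T * Λ₁) (h₂ : C₂ * T = T * Λ₂) (h₃ : C₃ * T = T * Λ₃)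
    (Λq Λs Λp : Matrix (Fin n) (Fin n) ℂ)
    (hΛq : Λq = Λ₁ᴴ * Λ₁ + Λ₂ᴴ * Λ₂ + Λ₃ᴴ * Λ₃)
    (hΛs : Λs = Λ₁ + Λ₂ + Λ₃)
    (hΛp : Λp = Λs * Λsᴴ)
    (hp : ∀ s, 0 < ((((3 : ℂ) • Λq - Λp)) s s).re)
    (Q₀ Q₁ Q₂ P₀ P₁ P₂ : Matrix (Fin 3 × Fin n) (Fin n) ℂ)
    (hQ₀ : Q₀ = ((1 : Matrix (Fin 3) (Fin 3) ℂ) ⊗ₖ T) * stack3 Λ₁ Λ₂ Λ₃ * invSqrtDiag Λq)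
    (hQ₁ : Q₁ = ((1 : Matrix (Fin 3) (Fin 3) ℂ) ⊗ₖ T)
      * stack3 (Λq - Λ₁ * Λsᴴ) (Λq - Λ₂ * Λsᴴ) (Λq - Λ₃ * Λsᴴ)
      * invSqrtDiag (((3 : ℂ) • Λq - Λp) * Λq))
    (hQ₂ : Q₂ = ((1 : Matrix (Fin 3) (Fin 3) ℂ) ⊗ₖ T)
      * stack3 (Λ₃ᴴ - Λ₂ᴴ) (Λ₁ᴴ - Λ₃ᴴ) (Λ₂ᴴ - Λ₁ᴴ)
      * invSqrtDiag ((3 : ℂ) • Λq - Λp))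
    (hP₀ : P₀ = ((1 : Matrix (Fin 3) (Fin 3) ℂ) ⊗ₖ T) * stack3 Λ₁ᴴ Λ₂ᴴ Λ₃ᴴ * invSqrtDiag Λq)
    (hP₁ : P₁ = ((1 : Matrix (Fin 3) (Fin 3) ℂ) ⊗ₖ T)
      * stack3 (Λq - Λ₁ᴴ * Λs) (Λq - Λ₂ᴴ * Λs) (Λq - Λ₃ᴴ * Λs)
      * invSqrtDiag (((3 : ℂ) • Λq - Λp) * Λq))
    (hP₂ : P₂ = ((1 : Matrix (Fin 3) (Fin 3) ℂ) ⊗ₖ T)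
      * stack3 (Λ₂ - Λ₃) (Λ₃ - Λ₁) (Λ₁ - Λ₂)
      * invSqrtDiag ((3 : ℂ) • Λq - Λp))
    (Q P : Matrix (Fin 3 × Fin n) (Fin 3 × Fin n) ℂ)
    (hQ : Q = hstack3 Q₁ Q₂ Q₀) (hP : P = hstack3 P₂ P₁ P₀) :
    Pᴴ * P = 1 ∧ P * Pᴴ = 1 ∧
    curlMat C₁ C₂ C₃ = P * blockdiag3 (sqrtDiag Λq) (sqrtDiag Λq) * Qᴴ ∧
    curlMat C₁ C₂ C₃
      = hstack2 P₂ P₁ * blockdiag2 (sqrtDiag Λq) * (hstack2 Q₁ Q₂)ᴴ := by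
  obtain ⟨a, rfl⟩ : ∃ a, Λ₁ = diagonal a := ⟨_, hΛ₁.diagonal_diag.symm⟩
  obtain ⟨b, rfl⟩ : ∃ b, Λ₂ = diagonal b := ⟨_, hΛ₂.diagonal_diag.symm⟩
  obtain ⟨c, rfl⟩ : ∃ c, Λ₃ = diagonal c := ⟨_, hΛ₃.diagonal_diag.symm⟩
  have hΛq' : Λq = diagonal fun s => (eigNormSq (a s) (b s) (c s) : ℂ) :=
    hΛq.trans (conjTranspose_mul_diagonal_sum_eq_diagonal_eigNormSq a b c)
  have hgap : (3 : ℂ) • Λq - Λp = diagonal fun s => (eigGap (a s) (b s) (c s) : ℂ) := by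
    rw [hΛp, hΛs, hΛq', three_smul_sub_eq_diagonal_eigGap]
  have hpos s : 0 < eigGap (a s) (b s) (c s) := by
    simpa only [hgap, diagonal_apply_eq, Complex.ofReal_re] using hp s
  set 𝕋 := (1 : Matrix (Fin 3) (Fin 3) ℂ) ⊗ₖ T
  have hPU : P = 𝕋 * blockDiagonal fun s => curlSvdLeft (a s) (b s) (c s) := by
    rw [hP, hP₂, hP₁, hP₀]
    exact hstack3_eq_one_kronecker_mul_blockDiagonal_curlSvdLeft T hΛq' hΛs hgap hpos
  have hQV : Q = 𝕋 * blockDiagonal fun s => curlSvdRight (a s) (b s) (c s) := by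
    rw [hQ, hQ₁, hQ₂, hQ₀]
    exact hstack3_eq_one_kronecker_mul_blockDiagonal_curlSvdRight T hΛq' hΛs hgap hpos
  have hSigma : blockdiag3 (sqrtDiag Λq) (sqrtDiag Λq)
      = blockDiagonal fun s => curlSvdSigma (a s) (b s) (c s) := by
    rw [hΛq', sqrtDiag_diagonal_ofReal, blockdiag3_diagonal]
    rfl
  have hPP : Pᴴ * P = 1 := by
    rw [hPU]
    exact conjTranspose_mul_self_mul_blockDiagonal (one_kronecker_conjTranspose_mul_self hT)
      fun s => curlSvdLeft_conjTranspose_mul_self (hpos s)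
  have hsvd : curlMat C₁ C₂ C₃ = P * blockdiag3 (sqrtDiag Λq) (sqrtDiag Λq) * Qᴴ := by
    rw [hPU, hQV, hSigma, mul_blockDiagonal_mul_blockDiagonal_mul_conjTranspose]
    simp only [curlSvdLeft_mul_sigma_mul_right (hpos _)]
    exact curlMat_eq_of_mul_eq_mul_diagonal (mul_eq_one_comm.mp hT) h₁ h₂ h₃
  refine ⟨hPP, mul_eq_one_comm.mp hPP, hsvd, ?_⟩
  rw [hsvd, hP, hQ, hstack3_mul_blockdiag3_mul_conjTranspose,
    hstack2_mul_blockdiag2_mul_conjTranspose]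

/-- Section 5.1: the singular value decomposition of the discrete single-curl
operator: `P = [P₂, P₁, P₀]` is unitary and `C = P blockdiag(Λq^{1/2}, Λq^{1/2}, 0) Q*`;
equivalently `C = P_r Σ_r Q_r*` with `P_r = [P₂, P₁]`, `Q_r = [Q₁, Q₂]`,
`Σ_r = blockdiag(Λq^{1/2}, Λq^{1/2})`. -/
theorem stmt_16 (n : ℕ) (hn : 1 ≤ n)
    (T Λ₁ Λ₂ Λ₃ C₁ C₂ C₃ : Matrix (Fin n) (Fin n) ℂ)
    (hT : Tᴴ * T = 1) (hT' : T * Tᴴ = 1)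
    (hΛ₁ : Λ₁.IsDiag) (hΛ₂ : Λ₂.IsDiag) (hΛ₃ : Λ₃.IsDiag)
    (h₁ : C₁ * T = T * Λ₁) (h₂ : C₂ * T = T * Λ₂) (h₃ : C₃ * T = T * Λ₃)
    (Λq Λs Λp : Matrix (Fin n) (Fin n) ℂ)
    (hΛq : Λq = Λ₁ᴴ * Λ₁ + Λ₂ᴴ * Λ₂ + Λ₃ᴴ * Λ₃)
    (hΛs : Λs = Λ₁ + Λ₂ + Λ₃)
    (hΛp : Λp = Λs * Λsᴴ)
    (hq : ∀ s, 0 < (Λq s s).re)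
    (hp : ∀ s, 0 < ((((3 : ℂ) • Λq - Λp)) s s).re)
    (Q₀ Q₁ Q₂ P₀ P₁ P₂ : Matrix (Fin 3 × Fin n) (Fin n) ℂ)
    (hQ₀ : Q₀ = ((1 : Matrix (Fin 3) (Fin 3) ℂ) ⊗ₖ T) * stack3 Λ₁ Λ₂ Λ₃ * invSqrtDiag Λq)
    (hQ₁ : Q₁ = ((1 : Matrix (Fin 3) (Fin 3) ℂ) ⊗ₖ T)
      * stack3 (Λq - Λ₁ * Λsᴴ) (Λq - Λ₂ * Λsᴴ) (Λq - Λ₃ * Λsᴴ)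
      * invSqrtDiag (((3 : ℂ) • Λq - Λp) * Λq))
    (hQ₂ : Q₂ = ((1 : Matrix (Fin 3) (Fin 3) ℂ) ⊗ₖ T)
      * stack3 (Λ₃ᴴ - Λ₂ᴴ) (Λ₁ᴴ - Λ₃ᴴ) (Λ₂ᴴ - Λ₁ᴴ)
      * invSqrtDiag ((3 : ℂ) • Λq - Λp))
    (hP₀ : P₀ = ((1 : Matrix (Fin 3) (Fin 3) ℂ) ⊗ₖ T) * stack3 Λ₁ᴴ Λ₂ᴴ Λ₃ᴴ * invSqrtDiag Λq)
    (hP₁ : P₁ = ((1 : Matrix (Fin 3) (Fin 3) ℂ) ⊗ₖ T)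
      * stack3 (Λq - Λ₁ᴴ * Λs) (Λq - Λ₂ᴴ * Λs) (Λq - Λ₃ᴴ * Λs)
      * invSqrtDiag (((3 : ℂ) • Λq - Λp) * Λq))
    (hP₂ : P₂ = ((1 : Matrix (Fin 3) (Fin 3) ℂ) ⊗ₖ T)
      * stack3 (Λ₂ - Λ₃) (Λ₃ - Λ₁) (Λ₁ - Λ₂)
      * invSqrtDiag ((3 : ℂ) • Λq - Λp))
    (Q P : Matrix (Fin 3 × Fin n) (Fin 3 × Fin n) ℂ)
    (hQ : Q = hstack3 Q₁ Q₂ Q₀) (hP : P = hstack3 P₂ P₁ P₀) :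
    Pᴴ * P = 1 ∧ P * Pᴴ = 1 ∧
    curlMat C₁ C₂ C₃ = P * blockdiag3 (sqrtDiag Λq) (sqrtDiag Λq) * Qᴴ ∧
    curlMat C₁ C₂ C₃
      = hstack2 P₂ P₁ * blockdiag2 (sqrtDiag Λq) * (hstack2 Q₁ Q₂)ᴴ :=
  stmt_16_general n T Λ₁ Λ₂ Λ₃ C₁ C₂ C₃ hT hΛ₁ hΛ₂ hΛ₃ h₁ h₂ h₃ Λq Λs Λp hΛq hΛs hΛp hp Q₀ Q₁ Q₂ P₀
    P₁ P₂ hQ₀ hQ₁ hQ₂ hP₀ hP₁ hP₂ Q P hQ hP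
end

section
/- Let N ≥ m ≥ 1, let Q_r ∈ ℂ^{N×m} satisfy Q_r*Q_r = I_m, let Σ_r ∈ ℂ^{m×m} be diagonal with positive real diagonal entries, set A := Q_r Σ_r² Q_r*, and let B ∈ ℂ^{N×N} be Hermitian positive definite. Then: (i) M := Σ_r Q_r* B⁻¹ Q_r Σ_r is Hermitian positive definite, in particular invertible; (ii) B⁻¹Q_rΣ_r has full column rank m; (iii) A · (B⁻¹Q_rΣ_r) = B · (B⁻¹Q_rΣ_r) · M. Hence the column span of B⁻¹Q_rΣ_r is an m-dimensional invariant subspace of the pencil A x = λ B x corresponding to its nonzero eigenvalues. (Theorem 5.2 of the paper, with N = 3n, m = 2n, A = C*C = Q_rΣ_r²Q_r* from the SVD of the discrete curl operator, and B the diagonal positive definite permittivity matrix.) -/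
open Matrix
open scoped ComplexOrder

/-!
With `X := Q_r Σ_r` one has `A = X X*`, `M = X* B⁻¹ X` and `X* X = Σ_r²`, which is invertible.
Hence `X` is injective, so `M` is positive definite as a congruence of `B⁻¹`; the rank of
`B⁻¹ X` is that of `X`, which is the rank `m` of the Gram matrix `X* X`; and
`A (B⁻¹ X) = X (X* B⁻¹ X) = B (B⁻¹ X) M`.
-/

namespace Matrix

variable {n m R : Type*} [Fintype n]

theorem mulVec_injective_of_isUnit_mul [Semiring R] [Fintype m] [DecidableEq m] {L : Matrix m n R}
    {X : Matrix n m R} (h : IsUnit (L * X)) : Function.Injective X.mulVec := by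
  refine Function.Injective.of_comp (f := L.mulVec) ?_
  simpa only [Function.comp_def, mulVec_mulVec] using mulVec_injective_of_isUnit h

theorem isHermitian_diagonal_ofReal {𝕜 : Type*} [RCLike 𝕜] [DecidableEq m] (d : m → ℝ) :
    (diagonal fun i => (d i : 𝕜)).IsHermitian :=
  isHermitian_diagonal_of_self_adjoint _ (funext fun i => RCLike.conj_ofReal (d i))

end Matrix

theorem stmt_17_general (N m : ℕ)
    (Qr : Matrix (Fin N) (Fin m) ℂ) (hQr : Qrᴴ * Qr = 1)
    (d : Fin m → ℝ) (hd : ∀ i, 0 < d i)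
    (Sr : Matrix (Fin m) (Fin m) ℂ)
    (hSr : Sr = Matrix.diagonal fun i => ((d i : ℝ) : ℂ))
    (B : Matrix (Fin N) (Fin N) ℂ) (hB : B.PosDef)
    (A : Matrix (Fin N) (Fin N) ℂ) (hA : A = Qr * Sr ^ 2 * Qrᴴ)
    (M : Matrix (Fin m) (Fin m) ℂ) (hM : M = Sr * Qrᴴ * B⁻¹ * Qr * Sr) :
    M.PosDef ∧ IsUnit M ∧
    (B⁻¹ * Qr * Sr).rank = m ∧
    A * (B⁻¹ * Qr * Sr) = B * (B⁻¹ * Qr * Sr) * M := by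
  have hSr_herm : Srᴴ = Sr := hSr ▸ (isHermitian_diagonal_ofReal d).eq
  have hSr_unit : IsUnit Sr := by
    rw [hSr, isUnit_diagonal, Pi.isUnit_iff]
    exact fun i => (Complex.ofReal_ne_zero.mpr (hd i).ne').isUnit
  have hGram : IsUnit ((Qr * Sr)ᴴ * (Qr * Sr)) := by
    rw [conjTranspose_mul, hSr_herm, Matrix.mul_assoc, ← Matrix.mul_assoc Qrᴴ, hQr, Matrix.one_mul]
    exact hSr_unit.mul hSr_unit
  have hA_gram : A = Qr * Sr * (Qr * Sr)ᴴ := by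
    rw [hA, conjTranspose_mul, hSr_herm, sq]
    simp only [Matrix.mul_assoc]
  have hM_gram : M = (Qr * Sr)ᴴ * B⁻¹ * (Qr * Sr) := by
    rw [hM, conjTranspose_mul, hSr_herm]
    simp only [Matrix.mul_assoc]
  have hMpd : M.PosDef :=
    hM_gram ▸ hB.inv.conjTranspose_mul_mul_same (mulVec_injective_of_isUnit_mul hGram)
  have hBdet : IsUnit B.det := hB.det_pos.ne'.isUnit
  refine ⟨hMpd, hMpd.isUnit, ?_, ?_⟩
  · rw [Matrix.mul_assoc, rank_mul_eq_right_of_isUnit_det _ _ (isUnit_nonsing_inv_det _ hBdet),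
      ← rank_conjTranspose_mul_self, rank_of_isUnit _ hGram, Fintype.card_fin]
  · rw [hA_gram, hM_gram]
    simp only [Matrix.mul_assoc, mul_nonsing_inv_cancel_left _ _ hBdet]

/-- Theorem 5.2: with `A = Q_r Σ_r² Q_r*` (from the SVD of the discrete curl
operator) and `B` Hermitian positive definite, `span{B⁻¹Q_rΣ_r}` is an invariant
subspace of the pencil `A x = λ B x` corresponding to its nonzero eigenvalues:
`M = Σ_r Q_r* B⁻¹ Q_r Σ_r` is Hermitian positive definite (in particular invertible),
`B⁻¹Q_rΣ_r` has full column rank `m`, and `A(B⁻¹Q_rΣ_r) = B(B⁻¹Q_rΣ_r)M`. -/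
theorem stmt_17 (N m : ℕ) (hm : 1 ≤ m) (hNm : m ≤ N)
    (Qr : Matrix (Fin N) (Fin m) ℂ) (hQr : Qrᴴ * Qr = 1)
    (d : Fin m → ℝ) (hd : ∀ i, 0 < d i)
    (Sr : Matrix (Fin m) (Fin m) ℂ)
    (hSr : Sr = Matrix.diagonal fun i => ((d i : ℝ) : ℂ))
    (B : Matrix (Fin N) (Fin N) ℂ) (hB : B.PosDef)
    (A : Matrix (Fin N) (Fin N) ℂ) (hA : A = Qr * Sr ^ 2 * Qrᴴ)
    (M : Matrix (Fin m) (Fin m) ℂ) (hM : M = Sr * Qrᴴ * B⁻¹ * Qr * Sr) :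
    M.PosDef ∧ IsUnit M ∧
    (B⁻¹ * Qr * Sr).rank = m ∧
    A * (B⁻¹ * Qr * Sr) = B * (B⁻¹ * Qr * Sr) * M :=
  stmt_17_general N m Qr hQr d hd Sr hSr B hB A hA M hM
end

section
/- Let N ≥ m ≥ 1, let Q_r ∈ ℂ^{N×m} satisfy Q_r*Q_r = I_m, let Σ_r ∈ ℂ^{m×m} be diagonal with positive real diagonal entries, set A := Q_r Σ_r² Q_r* and A_r := Σ_r Q_r* B⁻¹ Q_r Σ_r, where B ∈ ℂ^{N×N} is Hermitian positive definite. Then the spectrum of A_r coincides with the set of nonzero eigenvalues of the generalized eigenvalue problem A x = λ B x: { λ ∈ ℂ : ∃ y ∈ ℂ^m, y ≠ 0, A_r y = λ y } = { λ ∈ ℂ : λ ≠ 0 and ∃ x ∈ ℂ^N, x ≠ 0, A x = λ B x }. (Section 5.2: the null-space free standard eigenvalue problem A_r y = λ y has exactly the nonzero eigenvalues of the generalized eigenvalue problem A x = λ B x.) -/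
open Matrix
open scoped ComplexOrder

/-!
With `C := Q_r Σ_r` we have `A = C Cᴴ` and `A_r = Cᴴ B⁻¹ C`, while `A x = λ B x` is the
standard eigenproblem for `B⁻¹ C Cᴴ`. The products `Cᴴ (B⁻¹ C)` and `(B⁻¹ C) Cᴴ` have the same
nonzero eigenvalues (an eigenvector `y` of the first is sent to the eigenvector `B⁻¹ C y` of the
second, and conversely via `Cᴴ`). Finally `0` is not an eigenvalue of `A_r`: since `C` is
injective, `Cᴴ B⁻¹ C` is positive definite.
-/

namespace Matrix

variable {m n : Type*} [Fintype m] [Fintype n]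

section CommRing

variable {R : Type*} [CommRing R]

theorem exists_mulVec_eq_smul_of_mul_comm [NoZeroDivisors R] (F : Matrix m n R)
    (G : Matrix n m R) {μ : R} (hμ : μ ≠ 0) :
    (∃ y, y ≠ 0 ∧ (F * G) *ᵥ y = μ • y) → ∃ x, x ≠ 0 ∧ (G * F) *ᵥ x = μ • x := by
  rintro ⟨y, hy, hFG⟩
  refine ⟨G *ᵥ y, fun hGy => hy ?_, ?_⟩
  · have : μ • y = 0 := by rw [← hFG, ← mulVec_mulVec, hGy, mulVec_zero]
    exact (smul_eq_zero.mp this).resolve_left hμ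
  · rw [mulVec_mulVec, Matrix.mul_assoc, ← mulVec_mulVec, hFG, mulVec_smul]

theorem exists_mulVec_eq_smul_mul_comm_iff [NoZeroDivisors R] (F : Matrix m n R)
    (G : Matrix n m R) {μ : R} (hμ : μ ≠ 0) :
    (∃ y, y ≠ 0 ∧ (F * G) *ᵥ y = μ • y) ↔ ∃ x, x ≠ 0 ∧ (G * F) *ᵥ x = μ • x :=
  ⟨exists_mulVec_eq_smul_of_mul_comm F G hμ, exists_mulVec_eq_smul_of_mul_comm G F hμ⟩

theorem mulVec_eq_smul_mulVec_iff [DecidableEq n] {B : Matrix n n R} (hB : IsUnit B)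
    (M : Matrix n n R) (μ : R) (x : n → R) :
    M *ᵥ x = μ • B *ᵥ x ↔ (B⁻¹ * M) *ᵥ x = μ • x := by
  have hBinv : Function.Injective B⁻¹.mulVec :=
    mulVec_injective_of_isUnit (isUnit_nonsing_inv_iff.mpr hB)
  rw [← hBinv.eq_iff, mulVec_smul, mulVec_mulVec, mulVec_mulVec,
    nonsing_inv_mul B ((isUnit_iff_isUnit_det B).mp hB), one_mulVec]

end CommRing

section Field

variable {K : Type*} [Field K] [PartialOrder K] [StarRing K]

theorem PosDef.ne_zero_of_mulVec_eq_smul [DecidableEq n] {M : Matrix n n K} (hM : M.PosDef)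
    {y : n → K} (hy : y ≠ 0) {μ : K} (h : M *ᵥ y = μ • y) : μ ≠ 0 := by
  rintro rfl
  exact hy (mulVec_injective_of_isUnit hM.isUnit (by rw [h, zero_smul, mulVec_zero]))

theorem eigenvalues_conjTranspose_mul_inv_mul_eq [DecidableEq n] {B : Matrix n n K}
    (hB : B.PosDef) {C : Matrix n m K} (hC : Function.Injective C.mulVec) :
    {μ : K | ∃ y, y ≠ 0 ∧ (Cᴴ * B⁻¹ * C) *ᵥ y = μ • y}
      = {μ : K | μ ≠ 0 ∧ ∃ x, x ≠ 0 ∧ (C * Cᴴ) *ᵥ x = μ • B *ᵥ x} := by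
  classical
  ext μ
  simp only [Set.mem_ofPred_eq, mulVec_eq_smul_mulVec_iff hB.isUnit]
  rw [Matrix.mul_assoc Cᴴ, ← Matrix.mul_assoc B⁻¹]
  constructor
  · rintro ⟨y, hy, hμy⟩
    have hμ : μ ≠ 0 := (hB.inv.conjTranspose_mul_mul_same hC).ne_zero_of_mulVec_eq_smul hy
      (by rwa [Matrix.mul_assoc])
    exact ⟨hμ, (exists_mulVec_eq_smul_mul_comm_iff Cᴴ (B⁻¹ * C) hμ).mp ⟨y, hy, hμy⟩⟩
  · rintro ⟨hμ, hx⟩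
    exact (exists_mulVec_eq_smul_mul_comm_iff Cᴴ (B⁻¹ * C) hμ).mpr hx

end Field

theorem mulVec_injective_of_mul_eq_one {R : Type*} [Semiring R] [DecidableEq n]
    {M : Matrix m n R} {L : Matrix n m R} (h : L * M = 1) : Function.Injective M.mulVec :=
  fun x y hxy => by simpa only [mulVec_mulVec, h, one_mulVec] using congrArg (L *ᵥ ·) hxy

end Matrix

theorem stmt_18_general (N m : ℕ)
    (Qr : Matrix (Fin N) (Fin m) ℂ) (hQr : Qrᴴ * Qr = 1)
    (d : Fin m → ℝ) (hd : ∀ i, 0 < d i)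
    (Sr : Matrix (Fin m) (Fin m) ℂ)
    (hSr : Sr = Matrix.diagonal fun i => ((d i : ℝ) : ℂ))
    (B : Matrix (Fin N) (Fin N) ℂ) (hB : B.PosDef)
    (A : Matrix (Fin N) (Fin N) ℂ) (hA : A = Qr * Sr ^ 2 * Qrᴴ)
    (Ar : Matrix (Fin m) (Fin m) ℂ) (hAr : Ar = Sr * Qrᴴ * B⁻¹ * Qr * Sr) :
    {lam : ℂ | ∃ y : Fin m → ℂ, y ≠ 0 ∧ Ar.mulVec y = lam • y}
      = {lam : ℂ | lam ≠ 0 ∧ ∃ x : Fin N → ℂ, x ≠ 0 ∧ A.mulVec x = lam • B.mulVec x} := by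
  have hSr_herm : Srᴴ = Sr := by
    simp [hSr, diagonal_conjTranspose]
  have hSr_unit : IsUnit Sr := by
    rw [hSr, isUnit_diagonal, Pi.isUnit_iff]
    exact fun i => isUnit_iff_ne_zero.mpr (Complex.ofReal_ne_zero.mpr (hd i).ne')
  have hC : Function.Injective (Qr * Sr).mulVec := by
    rw [show (Qr * Sr).mulVec = Qr.mulVec ∘ Sr.mulVec from funext fun _ => (mulVec_mulVec ..).symm]
    exact (mulVec_injective_of_mul_eq_one hQr).comp (mulVec_injective_of_isUnit hSr_unit)
  have hAr' : Ar = (Qr * Sr)ᴴ * B⁻¹ * (Qr * Sr) := by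
    simp only [hAr, conjTranspose_mul, hSr_herm, Matrix.mul_assoc]
  have hA' : A = (Qr * Sr) * (Qr * Sr)ᴴ := by
    simp only [hA, conjTranspose_mul, hSr_herm, sq, Matrix.mul_assoc]
  rw [hAr', hA']
  exact eigenvalues_conjTranspose_mul_inv_mul_eq hB hC

/-- Section 5.2: the null-space free standard eigenvalue problem
`A_r y = λ y`, `A_r = Σ_r Q_r* B⁻¹ Q_r Σ_r`, has exactly the nonzero eigenvalues
of the generalized eigenvalue problem `A x = λ B x` with `A = Q_r Σ_r² Q_r*`. -/
theorem stmt_18 (N m : ℕ) (hm : 1 ≤ m) (hNm : m ≤ N)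
    (Qr : Matrix (Fin N) (Fin m) ℂ) (hQr : Qrᴴ * Qr = 1)
    (d : Fin m → ℝ) (hd : ∀ i, 0 < d i)
    (Sr : Matrix (Fin m) (Fin m) ℂ)
    (hSr : Sr = Matrix.diagonal fun i => ((d i : ℝ) : ℂ))
    (B : Matrix (Fin N) (Fin N) ℂ) (hB : B.PosDef)
    (A : Matrix (Fin N) (Fin N) ℂ) (hA : A = Qr * Sr ^ 2 * Qrᴴ)
    (Ar : Matrix (Fin m) (Fin m) ℂ) (hAr : Ar = Sr * Qrᴴ * B⁻¹ * Qr * Sr) :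
    {lam : ℂ | ∃ y : Fin m → ℂ, y ≠ 0 ∧ Ar.mulVec y = lam • y}
      = {lam : ℂ | lam ≠ 0 ∧ ∃ x : Fin N → ℂ, x ≠ 0 ∧ A.mulVec x = lam • B.mulVec x} :=
  stmt_18_general N m Qr hQr d hd Sr hSr B hB A hA Ar hAr
end
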